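/- Define g(x,y) = e^{ik|x−y|}/(4π|x−y|) for x ≠ y in ℝ³, with k ≥ 0. If |t − x| ≤ a and |x − y| ≥ d with d > 2a > 0, then |g(t,y) − g(x,y)| ≤ a/(4π·d·(d−a)) + k·a/(4π·d). -/

import Mathlib

/-!
Write `r = |t - y|` and `s = |x - y|`, so that `|r - s| ≤ a`, `r ≥ d - a` and `s ≥ d`. Splitting
`e^{ikr}/r - e^{iks}/s = e^{ikr} (1/r - 1/s) + (e^{ikr} - e^{iks})/s`, the first term is bounded by
`|r - s|/(rs)` and, since `θ ↦ e^{iθ}` is `1`-Lipschitz, the second by `k |r - s|/s`.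
-/

open Complex

noncomputable def greenFree (k : ℝ) (x y : EuclideanSpace ℝ (Fin 3)) : ℂ :=
  Complex.exp (Complex.I * (k * ‖x - y‖)) / (4 * Real.pi * ‖x - y‖)

lemma norm_exp_I_mul_sub_exp_I_mul_le (s t : ℝ) :
    ‖exp (I * s) - exp (I * t)‖ ≤ |s - t| := by
  have hfactor : exp (I * s) - exp (I * t) = exp (I * t) * (exp (I * (s - t : ℝ)) - 1) := by
    push_cast
    rw [mul_sub, ← exp_add]
    ring_nf
  rw [hfactor, norm_mul, norm_exp_I_mul_ofReal, one_mul, ← Real.norm_eq_abs]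
  exact Real.norm_exp_I_mul_ofReal_sub_one_le

lemma norm_exp_I_mul_div_sub_le (k : ℝ) {r s : ℝ} (hr : 0 < r) (hs : 0 < s) :
    ‖exp (I * (k * r)) / r - exp (I * (k * s)) / s‖ ≤ |r - s| / (r * s) + |k| * |r - s| / s := by
  have hr' : (r : ℂ) ≠ 0 := by exact_mod_cast hr.ne'
  have hs' : (s : ℂ) ≠ 0 := by exact_mod_cast hs.ne'
  have hsplit : exp (I * (k * r)) / r - exp (I * (k * s)) / s =
      exp (I * (k * r)) * ((s - r) / (r * s) : ℝ) + (exp (I * (k * r)) - exp (I * (k * s))) / s := by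
    push_cast
    field_simp
    ring
  have hunit : ‖exp (I * (k * r))‖ = 1 := by exact_mod_cast norm_exp_I_mul_ofReal (k * r)
  have hphase := norm_exp_I_mul_sub_exp_I_mul_le (k * r) (k * s)
  push_cast at hphase
  rw [← mul_sub, abs_mul] at hphase
  rw [hsplit]
  refine (norm_add_le _ _).trans (add_le_add ?_ ?_)
  · rw [norm_mul, hunit, one_mul, norm_real, Real.norm_eq_abs, abs_div,
      abs_of_pos (mul_pos hr hs), abs_sub_comm]
  · rw [norm_div, norm_real, Real.norm_of_nonneg hs.le]
    exact div_le_div_of_nonneg_right hphase hs.le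

theorem green_diff_bound_general (k a d : ℝ) (hk : 0 ≤ k) (hd : 2 * a < d)
    (x y t : EuclideanSpace ℝ (Fin 3)) (ht : ‖t - x‖ ≤ a) (hxy : d ≤ ‖x - y‖) :
    ‖greenFree k t y - greenFree k x y‖ ≤
      a / (4 * Real.pi * d * (d - a)) + k * a / (4 * Real.pi * d) := by
  have hgreen : greenFree k t y - greenFree k x y =
      (exp (I * (k * ‖t - y‖)) / ‖t - y‖ - exp (I * (k * ‖x - y‖)) / ‖x - y‖) /
        (4 * Real.pi : ℝ) := by
    simp only [greenFree]
    push_cast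
    ring
  set r := ‖t - y‖
  set s := ‖x - y‖
  have ha : 0 ≤ a := (norm_nonneg _).trans ht
  have hrs : |r - s| ≤ a := by
    have := abs_norm_sub_norm_le (t - y) (x - y)
    rw [sub_sub_sub_cancel_right] at this
    exact this.trans ht
  have hda : 0 < d - a := by linarith
  have hr : d - a ≤ r := by linarith [abs_le.mp hrs]
  have hd₀ : 0 < d := by linarith
  have hs : 0 < s := hd₀.trans_le hxy
  calc ‖greenFree k t y - greenFree k x y‖
      ≤ (|r - s| / (r * s) + |k| * |r - s| / s) / (4 * Real.pi) := by
        rw [hgreen, norm_div, norm_real, Real.norm_of_nonneg (by positivity)]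
        gcongr
        exact norm_exp_I_mul_div_sub_le k (hda.trans_le hr) hs
    _ ≤ (a / ((d - a) * d) + k * a / d) / (4 * Real.pi) := by
        rw [abs_of_nonneg hk]
        gcongr ?_ / _
        refine add_le_add ?_ ?_
        · exact div_le_div₀ ha hrs (mul_pos hda hd₀) (mul_le_mul hr hxy hd₀.le (hda.le.trans hr))
        · exact div_le_div₀ (by positivity) (by gcongr) hd₀ hxy
    _ = a / (4 * Real.pi * d * (d - a)) + k * a / (4 * Real.pi * d) := by
        field_simp

theorem green_diff_bound (k a d : ℝ) (hk : 0 ≤ k) (ha : 0 < a) (hd : 2 * a < d)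
    (x y t : EuclideanSpace ℝ (Fin 3)) (ht : ‖t - x‖ ≤ a) (hxy : d ≤ ‖x - y‖) :
    ‖greenFree k t y - greenFree k x y‖ ≤
      a / (4 * Real.pi * d * (d - a)) + k * a / (4 * Real.pi * d) :=
  green_diff_bound_general k a d hk hd x y t ht hxy
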